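/- For complex q, z with |q| < 1 and |zq| < 1, Σ_{n≥0} z^{2n} q^{n²+n} / (zq; q²)_{n+1} = Σ_{n≥0} (−zq; q²)_n (zq)ⁿ. -/

import Mathlib

open scoped BigOperators

/-- Finite q-Pochhammer symbol `(a; q)_n`. -/
noncomputable def qPoch (a q : ℂ) (n : ℕ) : ℂ :=
  ∏ k ∈ Finset.range n, (1 - a * q ^ k)

/-- Infinite q-Pochhammer symbol `(a; q)_∞`. -/
noncomputable def qPochInf (a q : ℂ) : ℂ :=
  ∏' k : ℕ, (1 - a * q ^ k)

/-!
With `x = z q` and `Q = q²` the two sides are `∑ xⁿ xⁿ Q^(n choose 2) / (x; Q)_{n+1}` and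
`∑ (-x; Q)_n xⁿ`. Replacing the second factor `xⁿ` by `wⁿ`, both become functions `F` of `w`
satisfying `(1 - w) F(w) = 1 + x w F(w Q)` on the disc `‖w‖ ≤ ‖x‖`. Their difference `D` therefore
satisfies `D(x Qᴺ) = x² Qᴺ / (1 - x Qᴺ) · D(x Qᴺ⁺¹)`; the factor tends to `0` while `D` stays
bounded on the disc, which forces `D(x) = 0`.
-/

open Filter Topology Finset

section Recurrence

variable {E : Type*} [NormedAddCommGroup E]

theorem summable_of_norm_succ_le_mul [CompleteSpace E] {f : ℕ → E} {c : ℕ → ℝ}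
    (hc : Tendsto c atTop (𝓝 0)) (h : ∀ n, ‖f (n + 1)‖ ≤ c n * ‖f n‖) : Summable f := by
  refine summable_of_ratio_norm_eventually_le (r := 1 / 2) (by norm_num) ?_
  filter_upwards [hc.eventually_le_const (by norm_num : (0 : ℝ) < 1 / 2)] with n hn
  exact (h n).trans (mul_le_mul_of_nonneg_right hn (norm_nonneg _))

theorem eq_zero_of_norm_le_mul_succ {f : ℕ → E} {c : ℕ → ℝ} {M : ℝ}
    (hc : Tendsto c atTop (𝓝 0)) (hc0 : ∀ n, 0 ≤ c n)
    (h : ∀ n, ‖f n‖ ≤ c n * ‖f (n + 1)‖) (hM : ∀ n, ‖f n‖ ≤ M) : f 0 = 0 := by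
  have hprod0 : ∀ N, 0 ≤ ∏ j ∈ range N, c j := fun N => prod_nonneg fun j _ => hc0 j
  have hiter : ∀ N, ‖f 0‖ ≤ (∏ j ∈ range N, c j) * ‖f N‖ := by
    intro N
    induction N with
    | zero => simp
    | succ N ih =>
      rw [prod_range_succ, mul_assoc]
      exact ih.trans (mul_le_mul_of_nonneg_left (h N) (hprod0 N))
  have hprod : Tendsto (fun N => ∏ j ∈ range N, c j) atTop (𝓝 0) := by
    refine (summable_of_norm_succ_le_mul hc fun N => ?_).tendsto_atTop_zero
    rw [prod_range_succ, norm_mul, mul_comm, Real.norm_of_nonneg (hc0 N)]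
  have hbound : Tendsto (fun N => (∏ j ∈ range N, c j) * M) atTop (𝓝 0) := by
    simpa using hprod.mul_const M
  exact norm_le_zero_iff.mp <| ge_of_tendsto' hbound fun N =>
    (hiter N).trans (mul_le_mul_of_nonneg_left (hM N) (hprod0 N))

end Recurrence

theorem Nat.choose_two_succ (n : ℕ) : (n + 1).choose 2 = n.choose 2 + n := by
  rw [Nat.choose_succ_succ', Nat.choose_one_right, add_comm]

theorem Nat.sq_add_self_eq_two_mul_add_two_mul_choose_two (n : ℕ) :
    n ^ 2 + n = 2 * n + 2 * n.choose 2 := by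
  induction n with
  | zero => rfl
  | succ n ih =>
    rw [Nat.choose_two_succ]
    linear_combination ih

theorem summable_pow_mul_pow_choose_two (ρ : ℝ) {s : ℝ} (hs0 : 0 ≤ s) (hs : s < 1) :
    Summable fun n : ℕ => ρ ^ n * s ^ n.choose 2 := by
  refine summable_of_norm_succ_le_mul (c := fun n => |ρ| * s ^ n) ?_ fun n => le_of_eq ?_
  · simpa using (tendsto_pow_atTop_nhds_zero_of_lt_one hs0 hs).const_mul |ρ|
  · simp only [Real.norm_eq_abs, abs_mul, abs_pow, abs_of_nonneg hs0, Nat.choose_two_succ]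
    ring

theorem qPoch_succ (a q : ℂ) (n : ℕ) : qPoch a q (n + 1) = qPoch a q n * (1 - a * q ^ n) :=
  prod_range_succ _ _

theorem qPoch_succ' (a q : ℂ) (n : ℕ) : qPoch a q (n + 1) = (1 - a) * qPoch (a * q) q n := by
  simp only [qPoch, prod_range_succ', pow_zero, mul_one, pow_succ', mul_assoc, mul_comm]

theorem norm_mul_pow_le (a : ℂ) {q : ℂ} (hq : ‖q‖ ≤ 1) (k : ℕ) : ‖a * q ^ k‖ ≤ ‖a‖ := by
  rw [norm_mul, norm_pow]
  exact mul_le_of_le_one_right (norm_nonneg a) (pow_le_one₀ (norm_nonneg q) hq)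

theorem one_sub_norm_le_norm_one_sub_mul_pow (a : ℂ) {q : ℂ} (hq : ‖q‖ ≤ 1) (k : ℕ) :
    1 - ‖a‖ ≤ ‖1 - a * q ^ k‖ := by
  have := norm_mul_pow_le a hq k
  calc 1 - ‖a‖ ≤ ‖(1 : ℂ)‖ - ‖a * q ^ k‖ := by rw [norm_one]; linarith
    _ ≤ ‖1 - a * q ^ k‖ := norm_sub_norm_le _ _

theorem pow_one_sub_norm_le_norm_qPoch {a q : ℂ} (ha : ‖a‖ ≤ 1) (hq : ‖q‖ ≤ 1) (n : ℕ) :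
    (1 - ‖a‖) ^ n ≤ ‖qPoch a q n‖ := by
  calc (1 - ‖a‖) ^ n = ∏ _k ∈ range n, (1 - ‖a‖) := by rw [prod_const, card_range]
    _ ≤ ‖qPoch a q n‖ := by
      rw [qPoch, norm_prod]
      exact prod_le_prod (fun _ _ => sub_nonneg.2 ha) fun k _ =>
        one_sub_norm_le_norm_one_sub_mul_pow a hq k

theorem norm_qPoch_le_exp (a : ℂ) {q : ℂ} (hq : ‖q‖ < 1) (n : ℕ) :
    ‖qPoch a q n‖ ≤ Real.exp (‖a‖ / (1 - ‖q‖)) := by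
  calc ‖qPoch a q n‖ ≤ ∏ k ∈ range n, Real.exp (‖a‖ * ‖q‖ ^ k) := by
        rw [qPoch, norm_prod]
        refine prod_le_prod (fun _ _ => norm_nonneg _) fun k _ => ?_
        calc ‖1 - a * q ^ k‖ ≤ ‖(1 : ℂ)‖ + ‖a * q ^ k‖ := norm_sub_le _ _
          _ = ‖a‖ * ‖q‖ ^ k + 1 := by rw [norm_one, norm_mul, norm_pow, add_comm]
          _ ≤ _ := Real.add_one_le_exp _
    _ = Real.exp (‖a‖ * ∑ k ∈ range n, ‖q‖ ^ k) := by rw [← Real.exp_sum, mul_sum]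
    _ ≤ Real.exp (‖a‖ / (1 - ‖q‖)) := by
        have hgeom := geom_sum_Ico_le_of_lt_one (m := 0) (n := n) (norm_nonneg q) hq
        rw [pow_zero, ← range_eq_Ico] at hgeom
        rw [div_eq_mul_one_div ‖a‖]
        gcongr

namespace DiagonalNu

noncomputable def lhsTerm (x Q w : ℂ) (n : ℕ) : ℂ :=
  x ^ n * w ^ n * Q ^ n.choose 2 / qPoch w Q (n + 1)

noncomputable def rhsTerm (x Q w : ℂ) (n : ℕ) : ℂ :=
  qPoch (-x) Q n * w ^ n

variable {x Q w : ℂ} {r : ℝ}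

theorem lhsTerm_zero (x Q w : ℂ) : lhsTerm x Q w 0 = (1 - w)⁻¹ := by
  simp [lhsTerm, qPoch]

theorem lhsTerm_succ (x Q w : ℂ) (n : ℕ) :
    lhsTerm x Q w (n + 1) = x * w / (1 - w) * lhsTerm x Q (w * Q) n := by
  simp only [lhsTerm, qPoch_succ' w Q (n + 1), Nat.choose_two_succ, pow_add, div_eq_mul_inv,
    mul_inv, mul_pow]
  ring

theorem rhsTerm_zero (x Q w : ℂ) : rhsTerm x Q w 0 = 1 := by
  simp [rhsTerm, qPoch]

theorem rhsTerm_succ (x Q w : ℂ) (n : ℕ) :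
    rhsTerm x Q w (n + 1) = w * rhsTerm x Q w n + x * w * rhsTerm x Q (w * Q) n := by
  rw [rhsTerm, rhsTerm, rhsTerm, qPoch_succ]
  ring

theorem norm_lhsTerm_le (hQ : ‖Q‖ ≤ 1) (hx : ‖x‖ ≤ r) (hw : ‖w‖ ≤ r) (hr : r < 1) (n : ℕ) :
    ‖lhsTerm x Q w n‖ ≤ (r ^ 2 / (1 - r)) ^ n * ‖Q‖ ^ n.choose 2 / (1 - r) := by
  have hr0 : 0 < 1 - r := sub_pos.2 hr
  have hr_nonneg : 0 ≤ r := (norm_nonneg x).trans hx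
  have hden : (1 - r) ^ (n + 1) ≤ ‖qPoch w Q (n + 1)‖ :=
    (pow_le_pow_left₀ hr0.le (by linarith) _).trans
      (pow_one_sub_norm_le_norm_qPoch (hw.trans hr.le) hQ _)
  calc ‖lhsTerm x Q w n‖
      = ‖x‖ ^ n * ‖w‖ ^ n * ‖Q‖ ^ n.choose 2 / ‖qPoch w Q (n + 1)‖ := by
        simp only [lhsTerm, norm_div, norm_mul, norm_pow]
    _ ≤ r ^ n * r ^ n * ‖Q‖ ^ n.choose 2 / (1 - r) ^ (n + 1) := by
        have := pow_nonneg hr_nonneg n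
        gcongr
    _ = (r ^ 2 / (1 - r)) ^ n * ‖Q‖ ^ n.choose 2 / (1 - r) := by
        have : (1 - r) ^ n ≠ 0 := pow_ne_zero n hr0.ne'
        rw [div_pow, pow_succ, ← pow_mul, mul_comm 2 n, pow_mul, sq]
        field_simp

theorem summable_lhsTerm (hQ : ‖Q‖ < 1) (hx : ‖x‖ ≤ r) (hw : ‖w‖ ≤ r) (hr : r < 1) :
    Summable (lhsTerm x Q w) :=
  ((summable_pow_mul_pow_choose_two _ (norm_nonneg Q) hQ).div_const _).of_norm_bounded
    (norm_lhsTerm_le hQ.le hx hw hr)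

theorem norm_tsum_lhsTerm_le (hQ : ‖Q‖ < 1) (hx : ‖x‖ ≤ r) (hw : ‖w‖ ≤ r) (hr : r < 1) :
    ‖∑' n, lhsTerm x Q w n‖ ≤ ∑' n : ℕ, (r ^ 2 / (1 - r)) ^ n * ‖Q‖ ^ n.choose 2 / (1 - r) :=
  tsum_of_norm_bounded
    ((summable_pow_mul_pow_choose_two _ (norm_nonneg Q) hQ).div_const _).hasSum
    (norm_lhsTerm_le hQ.le hx hw hr)

theorem norm_rhsTerm_le (hQ : ‖Q‖ < 1) (n : ℕ) :
    ‖rhsTerm x Q w n‖ ≤ Real.exp (‖x‖ / (1 - ‖Q‖)) * ‖w‖ ^ n := by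
  rw [rhsTerm, norm_mul, norm_pow, ← norm_neg x]
  gcongr
  exact norm_qPoch_le_exp _ hQ n

theorem summable_rhsTerm (hQ : ‖Q‖ < 1) (hw : ‖w‖ < 1) : Summable (rhsTerm x Q w) :=
  ((summable_geometric_of_lt_one (norm_nonneg w) hw).mul_left _).of_norm_bounded
    (norm_rhsTerm_le hQ)

theorem norm_tsum_rhsTerm_le (hQ : ‖Q‖ < 1) (hw : ‖w‖ ≤ r) (hr : r < 1) :
    ‖∑' n, rhsTerm x Q w n‖ ≤ Real.exp (‖x‖ / (1 - ‖Q‖)) * (1 - r)⁻¹ := by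
  refine (tsum_of_norm_bounded
    ((hasSum_geometric_of_lt_one (norm_nonneg w) (hw.trans_lt hr)).mul_left _)
    (norm_rhsTerm_le hQ)).trans ?_
  gcongr

theorem one_sub_mul_tsum_lhsTerm (hs : Summable (lhsTerm x Q w)) (hw : w ≠ 1) :
    (1 - w) * ∑' n, lhsTerm x Q w n = 1 + x * w * ∑' n, lhsTerm x Q (w * Q) n := by
  have hw' : 1 - w ≠ 0 := sub_ne_zero.2 hw.symm
  rw [hs.tsum_eq_zero_add, lhsTerm_zero]
  simp only [lhsTerm_succ, tsum_mul_left]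
  field_simp

theorem one_sub_mul_tsum_rhsTerm (hs : Summable (rhsTerm x Q w))
    (hs' : Summable (rhsTerm x Q (w * Q))) :
    (1 - w) * ∑' n, rhsTerm x Q w n = 1 + x * w * ∑' n, rhsTerm x Q (w * Q) n := by
  have h := hs.tsum_eq_zero_add
  rw [rhsTerm_zero, tsum_congr (rhsTerm_succ x Q w), (hs.mul_left w).tsum_add (hs'.mul_left _),
    tsum_mul_left, tsum_mul_left] at h
  linear_combination h

theorem tsum_lhsTerm_eq_tsum_rhsTerm (hQ : ‖Q‖ < 1) (hx : ‖x‖ < 1) :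
    ∑' n, lhsTerm x Q x n = ∑' n, rhsTerm x Q x n := by
  set D : ℂ → ℂ := fun w => ∑' n, lhsTerm x Q w n - ∑' n, rhsTerm x Q w n
  have hD : ∀ w, ‖w‖ ≤ ‖x‖ → (1 - w) * D w = x * w * D (w * Q) := by
    intro w hw
    have hw1 : ‖w‖ < 1 := hw.trans_lt hx
    have hwQ : ‖w * Q‖ ≤ ‖x‖ := (pow_one Q ▸ norm_mul_pow_le w hQ.le 1).trans hw
    simp only [D, mul_sub,
      one_sub_mul_tsum_lhsTerm (summable_lhsTerm hQ le_rfl hw hx) (by rintro rfl; simp at hw1),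
      one_sub_mul_tsum_rhsTerm (summable_rhsTerm hQ hw1) (summable_rhsTerm hQ (hwQ.trans_lt hx))]
    ring
  have hx0 : 0 < 1 - ‖x‖ := sub_pos.2 hx
  have horbit (N : ℕ) : ‖x * Q ^ N‖ ≤ ‖x‖ := norm_mul_pow_le x hQ.le N
  have hstep (N : ℕ) :
      ‖D (x * Q ^ N)‖ ≤ ‖x‖ * ‖x * Q ^ N‖ / (1 - ‖x‖) * ‖D (x * Q ^ (N + 1))‖ := by
    have hsucc : x * Q ^ N * Q = x * Q ^ (N + 1) := by ring
    have h := congrArg norm (hD _ (horbit N))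
    rw [hsucc, norm_mul, norm_mul, norm_mul] at h
    rw [div_mul_eq_mul_div, le_div_iff₀ hx0, ← h, mul_comm]
    exact mul_le_mul_of_nonneg_right (one_sub_norm_le_norm_one_sub_mul_pow x hQ.le N)
      (norm_nonneg _)
  have hc : Tendsto (fun N : ℕ => ‖x‖ * ‖x * Q ^ N‖ / (1 - ‖x‖)) atTop (𝓝 0) := by
    simpa using (((tendsto_pow_atTop_nhds_zero_of_norm_lt_one hQ).const_mul x).norm.const_mul
      ‖x‖).div_const (1 - ‖x‖)
  have hbound (N : ℕ) : ‖D (x * Q ^ N)‖ ≤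
      (∑' n : ℕ, (‖x‖ ^ 2 / (1 - ‖x‖)) ^ n * ‖Q‖ ^ n.choose 2 / (1 - ‖x‖)) +
        Real.exp (‖x‖ / (1 - ‖Q‖)) * (1 - ‖x‖)⁻¹ :=
    (norm_sub_le _ _).trans <| add_le_add (norm_tsum_lhsTerm_le hQ le_rfl (horbit N) hx)
      (norm_tsum_rhsTerm_le hQ (horbit N) hx)
  have := eq_zero_of_norm_le_mul_succ hc (fun N => by positivity) hstep hbound
  simpa [D, sub_eq_zero] using this

end DiagonalNu

theorem nu_spec_2_6_general (q z : ℂ) (hq : ‖q‖ < 1) (hzq : ‖z * q‖ < 1) :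
    ∑' n : ℕ, z ^ (2 * n) * q ^ (n ^ 2 + n) / qPoch (z * q) (q ^ 2) (n + 1)
      = ∑' n : ℕ, qPoch (-(z * q)) (q ^ 2) n * (z * q) ^ n := by
  have hq2 : ‖q ^ 2‖ < 1 := by
    rw [norm_pow]
    exact pow_lt_one₀ (norm_nonneg q) hq two_ne_zero
  calc _ = ∑' n : ℕ, DiagonalNu.lhsTerm (z * q) (q ^ 2) (z * q) n := tsum_congr fun n => by
        rw [DiagonalNu.lhsTerm, Nat.sq_add_self_eq_two_mul_add_two_mul_choose_two, pow_add,
          pow_mul q 2]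
        ring
    _ = _ := DiagonalNu.tsum_lhsTerm_eq_tsum_rhsTerm hq2 hzq

theorem nu_spec_2_6 (q z : ℂ) (hq : ‖q‖ < 1) (hzq : ‖z * q‖ < 1)
    (hden : ∀ k : ℕ, 1 - z * q ^ (2 * k + 1) ≠ 0) :
    ∑' n : ℕ, z ^ (2 * n) * q ^ (n ^ 2 + n) / qPoch (z * q) (q ^ 2) (n + 1)
      = ∑' n : ℕ, qPoch (-(z * q)) (q ^ 2) n * (z * q) ^ n :=
  nu_spec_2_6_general q z hq hzq
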